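/- Let A be a c.e. subset of ℕ of Type 8. Then there exists a Type 8 generating set {D_0, D_1, …, R_0, R_1, …} for D(A) such that for every j: (1) D_i ∩ R_j = ∅ for all i > j; (2) the set R_j ∖ (D_0 ∪ … ∪ D_j) is infinite; and (3) ⋃_i D_i ⊆ ⋃_i R_i and the pairwise disjoint union ⋃_i R_i equals ℕ ∖ A. -/

import Mathlib

open Set Function

/-- A set of naturals is computably enumerable (c.e.) -/
def CESet (A : Set ℕ) : Prop := REPred (· ∈ A)

/-- A set of naturals is computable -/
def ComputableSet (A : Set ℕ) : Prop := ComputablePred (· ∈ A)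

/-- X ⊆* Y : X is almost contained in Y -/
def SubsetStar (X Y : Set ℕ) : Prop := (X \ Y).Finite

/-- X =* Y : X and Y differ by a finite set -/
def EqStar (X Y : Set ℕ) : Prop := (X \ Y).Finite ∧ (Y \ X).Finite

/-- G is a generating set for 𝒟(A): a countable family of c.e. sets, each disjoint
from A, such that every c.e. set disjoint from A is almost covered by finitely many
members of G. -/
def Generates (A : Set ℕ) (G : Set (Set ℕ)) : Prop :=
  G.Countable ∧ (∀ X ∈ G, CESet X) ∧ (∀ X ∈ G, Disjoint X A) ∧
  ∀ D : Set ℕ, CESet D → Disjoint D A →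
    ∃ F : Set (Set ℕ), F ⊆ G ∧ F.Finite ∧ SubsetStar D (⋃₀ F)

/-- S is simple -/
def SimpleSet (S : Set ℕ) : Prop :=
  CESet S ∧ Sᶜ.Infinite ∧ ∀ W : Set ℕ, CESet W → Disjoint W S → W.Finite

/-- A is 𝒟-maximal -/
def DMaximal (A : Set ℕ) : Prop :=
  CESet A ∧ ∀ W : Set ℕ, CESet W → ∃ D : Set ℕ, CESet D ∧ Disjoint D A ∧
    (SubsetStar W (A ∪ D) ∨ EqStar (W ∪ A ∪ D) Set.univ)

/-- M is r-maximal -/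
def RMaximal (M : Set ℕ) : Prop :=
  CESet M ∧ Mᶜ.Infinite ∧
    ∀ R : Set ℕ, ComputableSet R → (R ∩ Mᶜ).Finite ∨ (Rᶜ ∩ Mᶜ).Finite

/-- M is maximal -/
def MaximalSet (M : Set ℕ) : Prop :=
  CESet M ∧ Mᶜ.Infinite ∧
    ∀ W : Set ℕ, CESet W → M ⊆ W → (W \ M).Finite ∨ Wᶜ.Finite

/-- B is atomless -/
def AtomlessSet (B : Set ℕ) : Prop :=
  ∀ C : Set ℕ, CESet C → B ⊆ C → Cᶜ.Infinite →
    ∃ E : Set ℕ, CESet E ∧ SubsetStar C E ∧ (E \ C).Infinite ∧ Eᶜ.Infinite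

/-- A0, A1 form a Friedberg splitting of A -/
def FriedbergSplitting (A0 A1 A : Set ℕ) : Prop :=
  CESet A0 ∧ CESet A1 ∧ Disjoint A0 A1 ∧ A0 ∪ A1 = A ∧
    ∀ W : Set ℕ, CESet W → ¬ CESet (W \ A) → ¬ CESet (W \ A0) ∧ ¬ CESet (W \ A1)

/-- E is a major subset of D -/
def MajorIn (E D : Set ℕ) : Prop :=
  CESet E ∧ CESet D ∧ E ⊆ D ∧ (D \ E).Infinite ∧
    ∀ W : Set ℕ, CESet W → SubsetStar Dᶜ W → SubsetStar Eᶜ W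

/-- H is hh-simple: the lattice of c.e. supersets of H mod finite is a boolean algebra -/
def HHSimple (H : Set ℕ) : Prop :=
  CESet H ∧ Hᶜ.Infinite ∧
    ∀ W : Set ℕ, CESet W → ∃ V : Set ℕ, CESet V ∧
      EqStar ((W ∪ H) ∩ (V ∪ H)) H ∧ EqStar (W ∪ V ∪ H) Set.univ

/-- A is strongly r-separable -/
def StronglyRSeparable (A : Set ℕ) : Prop :=
  ∀ B : Set ℕ, CESet B → Disjoint B A →
    ∃ C : Set ℕ, ComputableSet C ∧ B ⊆ C ∧ Disjoint C A ∧ (C \ B).Infinite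

/-- Structure of a Type 5 generating family: D0 together with the R_i. -/
def Type5Family (D0 : Set ℕ) (R : ℕ → Set ℕ) : Prop :=
  CESet D0 ∧ ¬ ComputableSet D0 ∧ D0.Infinite ∧
  Function.Injective R ∧ (∀ i, D0 ≠ R i) ∧
  (∀ i, ComputableSet (R i) ∧ (R i).Infinite) ∧
  Pairwise (Function.onFun Disjoint R) ∧
  (∀ i, Disjoint D0 (R i))

/-- Structure of a Type 7 generating family: D0 together with the R_i. -/
def Type7Family (D0 : Set ℕ) (R : ℕ → Set ℕ) : Prop :=
  CESet D0 ∧ ¬ ComputableSet D0 ∧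
  Function.Injective R ∧ (∀ i, D0 ≠ R i) ∧
  (∀ i, ComputableSet (R i) ∧ (R i).Infinite) ∧
  Pairwise (Function.onFun Disjoint R) ∧
  {i : ℕ | (D0 ∩ R i).Nonempty}.Infinite

/-- Structure of a Type 8 generating family: the D_i together with the R_i. -/
def Type8Family (D R : ℕ → Set ℕ) : Prop :=
  Function.Injective D ∧ Function.Injective R ∧ (∀ i j, D i ≠ R j) ∧
  (∀ i, CESet (D i) ∧ ¬ ComputableSet (D i)) ∧
  Pairwise (Function.onFun Disjoint D) ∧
  (∀ i, ComputableSet (R i) ∧ (R i).Infinite) ∧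
  Pairwise (Function.onFun Disjoint R)

/-- Structure of a Type 9 generating family: the nested D_i together with the R_i. -/
def Type9Family (D R : ℕ → Set ℕ) : Prop :=
  Function.Injective R ∧ (∀ i j, D i ≠ R j) ∧
  (∀ i, ComputableSet (R i) ∧ (R i).Infinite) ∧
  Pairwise (Function.onFun Disjoint R) ∧
  (∀ i, CESet (D i) ∧ ¬ ComputableSet (D i) ∧ (D i).Infinite) ∧
  (∀ l, D l ⊆ D (l + 1)) ∧
  (∀ l, ¬ CESet (D (l + 1) \ D l)) ∧
  (∀ l, {j : ℕ | (R j \ D l).Infinite}.Infinite)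

def IsType1 (G : Set (Set ℕ)) : Prop := G = {∅}

def IsType2 (G : Set (Set ℕ)) : Prop :=
  ∃ R : Set ℕ, G = {R} ∧ ComputableSet R ∧ R.Infinite

def IsType3 (G : Set (Set ℕ)) : Prop :=
  ∃ W : Set ℕ, G = {W} ∧ CESet W ∧ ¬ ComputableSet W ∧ W.Infinite

def IsType4 (G : Set (Set ℕ)) : Prop :=
  ∃ R : ℕ → Set ℕ, G = Set.range R ∧ Function.Injective R ∧
    (∀ i, ComputableSet (R i) ∧ (R i).Infinite) ∧
    Pairwise (Function.onFun Disjoint R)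

def IsType5 (G : Set (Set ℕ)) : Prop :=
  ∃ (D0 : Set ℕ) (R : ℕ → Set ℕ), G = insert D0 (Set.range R) ∧ Type5Family D0 R

def IsType6 (G : Set (Set ℕ)) : Prop :=
  ∃ D : ℕ → Set ℕ, G = Set.range D ∧ Function.Injective D ∧
    (∀ i, CESet (D i) ∧ ¬ ComputableSet (D i) ∧ (D i).Infinite) ∧
    Pairwise (Function.onFun Disjoint D)

def IsType7 (G : Set (Set ℕ)) : Prop :=
  ∃ (D0 : Set ℕ) (R : ℕ → Set ℕ), G = insert D0 (Set.range R) ∧ Type7Family D0 R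

def IsType8 (G : Set (Set ℕ)) : Prop :=
  ∃ D R : ℕ → Set ℕ, G = Set.range D ∪ Set.range R ∧ Type8Family D R

def IsType9 (G : Set (Set ℕ)) : Prop :=
  ∃ D R : ℕ → Set ℕ, G = Set.range D ∪ Set.range R ∧ Type9Family D R

def IsType10 (G : Set (Set ℕ)) : Prop :=
  ∃ D : ℕ → Set ℕ, G = Set.range D ∧
    (∀ i, CESet (D i) ∧ ¬ ComputableSet (D i) ∧ (D i).Infinite) ∧
    (∀ l, D l ⊆ D (l + 1)) ∧
    (∀ l, ¬ CESet (D (l + 1) \ D l))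

/-- G is a generating set of Type n (n = 1, …, 10). -/
def GenTypeN (n : ℕ) (G : Set (Set ℕ)) : Prop :=
  match n with
  | 1 => IsType1 G
  | 2 => IsType2 G
  | 3 => IsType3 G
  | 4 => IsType4 G
  | 5 => IsType5 G
  | 6 => IsType6 G
  | 7 => IsType7 G
  | 8 => IsType8 G
  | 9 => IsType9 G
  | 10 => IsType10 G
  | _ => False

/-- The c.e. set A is of Type n: 𝒟(A) has a generating set of Type n
but no generating set of any Type m < n. -/
def SetOfType (A : Set ℕ) (n : ℕ) : Prop :=
  (∃ G : Set (Set ℕ), Generates A G ∧ GenTypeN n G) ∧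
  ∀ m : ℕ, m < n → ¬ ∃ G : Set (Set ℕ), Generates A G ∧ GenTypeN m G

/-- (F_i) is an A-special list. -/
def ASpecialList (A : Set ℕ) (F : ℕ → Set ℕ) : Prop :=
  F 0 = A ∧ (∀ i, CESet (F i) ∧ ¬ ComputableSet (F i)) ∧
  Pairwise (Function.onFun Disjoint F) ∧
  ∀ W : Set ℕ, CESet W → ∃ i : ℕ,
    SubsetStar W (⋃ l ≤ i, F l) ∨ EqStar (W ∪ ⋃ l ≤ i, F l) Set.univ

/-
Call a set `X` disjoint from `A` computably separable from `A` if some computable set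
disjoint from `A` contains it. In a Type 8 generating set infinitely many `Dᵢ` are not
separable: otherwise the separable ones could be swapped for computable sets, and the
remaining finitely many `Dᵢ` merge into one non-separable set, so the family collapses to a
generating set of Type 1–5 or 7. Swapping the separable `Dᵢ` and the `Rⱼ` for computable
pieces `Pₘ` partitioning `ℕ ∖ A` gives a generating family `(Dₙ) ∪ (Pₘ)` with every `Dₙ`
non-separable. For each finite `F`, infinitely many `Pₘ` must stay infinite outside
`⋃_{n ∈ F} Dₙ`: otherwise the finitely many others could be absorbed into `D₀`, and the `Dₙ`
alone would generate, a Type 6 generating set. So there are `k₀ < k₁ < ⋯` with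
`P_{kⱼ} ∖ (D₀ ∪ ⋯ ∪ Dⱼ)` infinite; group the `Pₘ` into consecutive finite blocks `Rⱼ`, the
`j`-th one ending at `kⱼ`, and replace `Dᵢ` by `Dᵢ ∖ (R₀ ∪ ⋯ ∪ R_{i-1})`. Removing a computable
set disjoint from `A` keeps a set non-separable.
-/

section Computability

lemma REPred.or {α : Type*} [Primcodable α] {p q : α → Prop} (hp : REPred p) (hq : REPred q) :
    REPred fun a => p a ∨ q a := by
  obtain ⟨k, hk, H⟩ := Partrec.merge' hp hq
  refine hk.of_eq fun a => Part.ext' ?_ fun _ _ => rfl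
  rw [(H a).2]
  simp [Part.assert]

lemma REPred.and {α : Type*} [Primcodable α] {p q : α → Prop} (hp : REPred p) (hq : REPred q) :
    REPred fun a => p a ∧ q a := by
  have hq' : Partrec₂ fun (a : α) (_ : Unit) => Part.assert (q a) fun _ => Part.some () :=
    hq.comp Computable.fst
  refine (hp.bind hq').of_eq fun a => Part.ext' ?_ fun _ _ => rfl
  simp [Part.assert, And.comm]

variable {X Y : Set ℕ}

lemma ComputableSet.ceSet (hX : ComputableSet X) : CESet X :=
  ComputablePred.to_re hX

lemma computableSet_empty : ComputableSet (∅ : Set ℕ) :=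
  ComputablePred.computable_iff.2 ⟨fun _ => false, Computable.const _, by simp⟩

lemma computableSet_singleton (a : ℕ) : ComputableSet ({a} : Set ℕ) :=
  ComputablePred.computable_iff.2 ⟨fun x => decide (x = a),
    (Primrec.eq.decide.comp Primrec.id (Primrec.const a)).to_comp, by ext; simp⟩

lemma ComputableSet.union (hX : ComputableSet X) (hY : ComputableSet Y) :
    ComputableSet (X ∪ Y) :=
  ComputablePred.computable_iff_re_compl_re'.2
    ⟨(hX.to_re.or hY.to_re).of_eq fun _ => Iff.rfl,
      (hX.not.to_re.and hY.not.to_re).of_eq fun _ => not_or.symm⟩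

lemma ComputableSet.diff (hX : ComputableSet X) (hY : ComputableSet Y) :
    ComputableSet (X \ Y) :=
  ComputablePred.computable_iff_re_compl_re'.2
    ⟨(hX.to_re.and hY.not.to_re).of_eq fun _ => Iff.rfl,
      (hX.not.to_re.or hY.to_re).of_eq fun _ => by
        simp only [mem_sdiff, not_and_or, not_not]⟩

lemma CESet.union (hX : CESet X) (hY : CESet Y) : CESet (X ∪ Y) :=
  REPred.or hX hY

lemma CESet.diff (hX : CESet X) (hY : ComputableSet Y) : CESet (X \ Y) :=
  REPred.and hX hY.not.to_re

lemma Set.Finite.computableSet (hX : X.Finite) : ComputableSet X := by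
  induction X, hX using Set.Finite.induction_on with
  | empty => exact computableSet_empty
  | @insert a s _ _ ih => exact (computableSet_singleton a).union ih

lemma infinite_of_not_computableSet (hX : ¬ComputableSet X) : X.Infinite :=
  fun h => hX h.computableSet

lemma ComputableSet.biUnion {ι : Type*} {s : Set ι} (hs : s.Finite) {f : ι → Set ℕ}
    (hf : ∀ i ∈ s, ComputableSet (f i)) : ComputableSet (⋃ i ∈ s, f i) := by
  induction s, hs using Set.Finite.induction_on with
  | empty => simpa using computableSet_empty
  | @insert a s _ _ ih =>
    rw [biUnion_insert]
    exact (hf a (mem_insert a s)).union (ih fun i hi => hf i (mem_insert_of_mem a hi))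

lemma CESet.biUnion {ι : Type*} {s : Set ι} (hs : s.Finite) {f : ι → Set ℕ}
    (hf : ∀ i ∈ s, CESet (f i)) : CESet (⋃ i ∈ s, f i) := by
  induction s, hs using Set.Finite.induction_on with
  | empty => simpa using computableSet_empty.ceSet
  | @insert a s _ _ ih =>
    rw [biUnion_insert]
    exact (hf a (mem_insert a s)).union (ih fun i hi => hf i (mem_insert_of_mem a hi))

end Computability

section AlmostCovered

variable {G G' : Set (Set ℕ)} {X Y : Set ℕ}

lemma subsetStar_of_subset (h : X ⊆ Y) : SubsetStar X Y := by
  simp [SubsetStar, sdiff_eq_empty.2 h]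

lemma SubsetStar.trans {Z : Set ℕ} (hXY : SubsetStar X Y) (hYZ : SubsetStar Y Z) :
    SubsetStar X Z :=
  (hXY.union hYZ).subset fun x hx => (em (x ∈ Y)).symm.imp (⟨hx.1, ·⟩) (⟨·, hx.2⟩)

def AlmostCovered (G : Set (Set ℕ)) (X : Set ℕ) : Prop :=
  ∃ F ⊆ G, F.Finite ∧ SubsetStar X (⋃₀ F)

namespace AlmostCovered

lemma of_finite (hX : X.Finite) : AlmostCovered G X :=
  ⟨∅, empty_subset G, finite_empty, hX.subset sdiff_subset⟩

lemma of_mem (hY : Y ∈ G) (hXY : X ⊆ Y) : AlmostCovered G X :=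
  ⟨{Y}, singleton_subset_iff.2 hY, finite_singleton Y,
    subsetStar_of_subset (by rwa [sUnion_singleton])⟩

lemma of_subsetStar (hXY : SubsetStar X Y) (hY : AlmostCovered G Y) : AlmostCovered G X :=
  let ⟨F, hFG, hF, hYF⟩ := hY
  ⟨F, hFG, hF, hXY.trans hYF⟩

lemma subset (hY : AlmostCovered G Y) (hXY : X ⊆ Y) : AlmostCovered G X :=
  hY.of_subsetStar (subsetStar_of_subset hXY)

lemma union (hX : AlmostCovered G X) (hY : AlmostCovered G Y) : AlmostCovered G (X ∪ Y) := by
  obtain ⟨F, hFG, hF, hXF⟩ := hX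
  obtain ⟨F', hF'G, hF', hYF'⟩ := hY
  refine ⟨F ∪ F', union_subset hFG hF'G, hF.union hF', (hXF.union hYF').subset ?_⟩
  rintro x ⟨hx | hx, hxF⟩
  · exact Or.inl ⟨hx, fun h => hxF (sUnion_mono subset_union_left h)⟩
  · exact Or.inr ⟨hx, fun h => hxF (sUnion_mono subset_union_right h)⟩

lemma biUnion {ι : Type*} {s : Set ι} (hs : s.Finite) {f : ι → Set ℕ}
    (hf : ∀ i ∈ s, AlmostCovered G (f i)) : AlmostCovered G (⋃ i ∈ s, f i) := by
  induction s, hs using Set.Finite.induction_on with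
  | empty => simpa using of_finite finite_empty
  | @insert a s _ _ ih =>
    rw [biUnion_insert]
    exact (hf a (mem_insert a s)).union (ih fun i hi => hf i (mem_insert_of_mem a hi))

lemma trans (hX : AlmostCovered G X) (hG : ∀ Y ∈ G, AlmostCovered G' Y) :
    AlmostCovered G' X :=
  let ⟨_, hFG, hF, hXF⟩ := hX
  .of_subsetStar hXF (sUnion_eq_biUnion ▸ .biUnion hF fun Y hY => hG Y (hFG hY))

end AlmostCovered

variable {A : Set ℕ}

lemma Generates.ceSet (h : Generates A G) (hX : X ∈ G) : CESet X :=
  h.2.1 X hX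

lemma Generates.disjoint (h : Generates A G) (hX : X ∈ G) : Disjoint X A :=
  h.2.2.1 X hX

lemma Generates.of_almostCovered (h : Generates A G) (hG' : G'.Countable)
    (hce : ∀ X ∈ G', CESet X) (hdisj : ∀ X ∈ G', Disjoint X A)
    (hcov : ∀ X ∈ G, AlmostCovered G' X) : Generates A G' :=
  ⟨hG', hce, hdisj, fun _ hW hWA => AlmostCovered.trans (h.2.2.2 _ hW hWA) hcov⟩

end AlmostCovered

section Separable

variable {A X Y C : Set ℕ}

def ComputablySeparable (X A : Set ℕ) : Prop :=
  ∃ C, ComputableSet C ∧ X ⊆ C ∧ Disjoint C A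

lemma ComputableSet.computablySeparable (hX : ComputableSet X) (hXA : Disjoint X A) :
    ComputablySeparable X A :=
  ⟨X, hX, subset_rfl, hXA⟩

lemma not_computableSet_of_not_computablySeparable (h : ¬ComputablySeparable X A)
    (hXA : Disjoint X A) : ¬ComputableSet X :=
  fun hX => h (hX.computablySeparable hXA)

lemma ComputablySeparable.mono (h : ComputablySeparable Y A) (hXY : X ⊆ Y) :
    ComputablySeparable X A :=
  let ⟨C, hC, hYC, hCA⟩ := h
  ⟨C, hC, hXY.trans hYC, hCA⟩

lemma ComputablySeparable.of_diff (h : ComputablySeparable (X \ C) A) (hC : ComputableSet C)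
    (hCA : Disjoint C A) : ComputablySeparable X A :=
  let ⟨C', hC', hXC', hC'A⟩ := h
  ⟨C ∪ C', hC.union hC', fun x hx => (em (x ∈ C)).imp id fun h => hXC' ⟨hx, h⟩,
    disjoint_union_left.2 ⟨hCA, hC'A⟩⟩

end Separable

section LowTypes

variable {A : Set ℕ}

def HasGeneratorOfType (A : Set ℕ) (n : ℕ) : Prop :=
  ∃ G, Generates A G ∧ GenTypeN n G

lemma injective_of_pairwise_disjoint {ι α : Type*} {f : ι → Set α} (hdis : Pairwise (Disjoint on f))
    (hne : ∀ i, (f i).Nonempty) : Injective f := by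
  intro i j hij
  by_contra hne'
  have h := hdis hne'
  rw [onFun, hij, disjoint_self, bot_eq_empty] at h
  exact (hne j).ne_empty h

lemma hasGeneratorOfType_le_three {W : Set ℕ} (h : Generates A {W}) :
    HasGeneratorOfType A 1 ∨ HasGeneratorOfType A 2 ∨ HasGeneratorOfType A 3 := by
  by_cases hW : ComputableSet W
  · rcases W.finite_or_infinite with hfin | hinf
    · refine Or.inl ⟨{∅}, h.of_almostCovered (countable_singleton _) ?_ ?_ ?_, rfl⟩
      · rintro _ rfl; exact computableSet_empty.ceSet
      · rintro _ rfl; exact disjoint_bot_left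
      · rintro _ rfl; exact .of_finite hfin
    · exact Or.inr (Or.inl ⟨{W}, h, W, rfl, hW, hinf⟩)
  · exact Or.inr (Or.inr ⟨{W}, h, W, rfl, h.ceSet rfl, hW, infinite_of_not_computableSet hW⟩)

lemma hasGeneratorOfType_four {R : ℕ → Set ℕ}
    (hR : ∀ j, ComputableSet (R j) ∧ (R j).Infinite) (hRdis : Pairwise (Disjoint on R))
    (h : Generates A (range R)) : HasGeneratorOfType A 4 :=
  ⟨_, h, R, rfl, injective_of_pairwise_disjoint hRdis fun j => (hR j).2.nonempty, hR, hRdis⟩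

lemma hasGeneratorOfType_five_or_seven {V : Set ℕ} {R : ℕ → Set ℕ}
    (hV : ¬ComputablySeparable V A) (hR : ∀ j, ComputableSet (R j) ∧ (R j).Infinite)
    (hRdis : Pairwise (Disjoint on R)) (h : Generates A (insert V (range R))) :
    HasGeneratorOfType A 5 ∨ HasGeneratorOfType A 7 := by
  have hVce := h.ceSet (mem_insert V _)
  have hVA := h.disjoint (mem_insert V _)
  have hRA : ∀ j, Disjoint (R j) A := fun j => h.disjoint (mem_insert_of_mem V ⟨j, rfl⟩)
  have hRinj := injective_of_pairwise_disjoint hRdis fun j => (hR j).2.nonempty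
  set J := {j | (V ∩ R j).Nonempty}
  by_cases hJ : J.Infinite
  · have hVnc := not_computableSet_of_not_computablySeparable hV hVA
    exact Or.inr ⟨_, h, V, R, rfl, hVce, hVnc, hRinj, fun j hj => hVnc (hj ▸ (hR j).1), hR,
      hRdis, hJ⟩
  rw [not_infinite] at hJ
  set C := ⋃ j ∈ J, R j
  have hC : ComputableSet C := .biUnion hJ fun j _ => (hR j).1
  have hCA : Disjoint C A := disjoint_iUnion₂_left.2 fun j _ => hRA j
  have hV'nc : ¬ComputableSet (V \ C) := not_computableSet_of_not_computablySeparable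
    (fun h' => hV (h'.of_diff hC hCA)) (hVA.mono_left sdiff_subset)
  have hRcov : ∀ j, AlmostCovered (insert (V \ C) (range R)) (R j) :=
    fun j => .of_mem (mem_insert_of_mem _ ⟨j, rfl⟩) subset_rfl
  have hgen : Generates A (insert (V \ C) (range R)) :=
    h.of_almostCovered ((countable_range R).insert _)
      (forall_mem_insert.2 ⟨hVce.diff hC, forall_mem_range.2 fun j => (hR j).1.ceSet⟩)
      (forall_mem_insert.2 ⟨hVA.mono_left sdiff_subset, forall_mem_range.2 hRA⟩)
      (forall_mem_insert.2 ⟨((AlmostCovered.of_mem (mem_insert _ _) subset_rfl).union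
          (.biUnion hJ fun j _ => hRcov j)).subset
          (subset_union_left.trans sdiff_union_self.superset),
        forall_mem_range.2 hRcov⟩)
  exact Or.inl ⟨_, hgen, V \ C, R, rfl, hVce.diff hC, hV'nc, infinite_of_not_computableSet hV'nc,
    hRinj, fun j hj => hV'nc (hj ▸ (hR j).1), hR, hRdis,
    fun j => disjoint_left.2 fun x hx hxj => hx.2 (mem_biUnion ⟨x, hx.1, hxj⟩ hxj)⟩

lemma hasGeneratorOfType_six {E : ℕ → Set ℕ} (hE : ∀ n, ¬ComputablySeparable (E n) A)
    (hEdis : Pairwise (Disjoint on E)) (h : Generates A (range E)) : HasGeneratorOfType A 6 := by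
  have hEnc : ∀ n, ¬ComputableSet (E n) := fun n =>
    not_computableSet_of_not_computablySeparable (hE n) (h.disjoint ⟨n, rfl⟩)
  have hEinf : ∀ n, (E n).Infinite := fun n => infinite_of_not_computableSet (hEnc n)
  exact ⟨_, h, E, rfl, injective_of_pairwise_disjoint hEdis fun n => (hEinf n).nonempty,
    fun n => ⟨h.ceSet ⟨n, rfl⟩, hEnc n, hEinf n⟩, hEdis⟩

end LowTypes

section Regrouping

lemma exists_partition_finite_of_strictMono {k : ℕ → ℕ} (hk : StrictMono k) :
    ∃ s : ℕ → Set ℕ, (∀ j, (s j).Finite) ∧ (∀ j, k j ∈ s j) ∧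
      (∀ m, ∃ j, m ∈ s j) ∧ Pairwise (Disjoint on s) := by
  refine ⟨fun j => {m | m ≤ k j ∧ ∀ i < j, k i < m},
    fun j => (finite_Iic (k j)).subset fun m hm => hm.1, fun j => ⟨le_rfl, fun i hi => hk hi⟩,
    fun m => ?_, fun i j hij => ?_⟩
  · have hex : ∃ j, m ≤ k j := ⟨m, hk.id_le m⟩
    exact ⟨Nat.find hex, Nat.find_spec hex, fun i hi => not_le.1 (Nat.find_min hex hi)⟩
  · wlog h : i < j generalizing i j
    · exact (this j i hij.symm (lt_of_le_of_ne (not_lt.1 h) hij.symm)).symm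
    exact disjoint_left.2 fun m hmi hmj => (hmj.2 i h).not_ge hmi.1

lemma exists_regroup {P : ℕ → Set ℕ} (hP : ∀ m, ComputableSet (P m))
    (hPdis : Pairwise (Disjoint on P)) {k : ℕ → ℕ} (hk : StrictMono k) :
    ∃ R : ℕ → Set ℕ, (∀ j, ComputableSet (R j)) ∧ Pairwise (Disjoint on R) ∧
      (∀ j, P (k j) ⊆ R j) ∧ (∀ m, ∃ j, P m ⊆ R j) ∧ (⋃ j, R j) = ⋃ m, P m := by
  obtain ⟨s, hsfin, hks, hscov, hsdis⟩ := exists_partition_finite_of_strictMono hk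
  have hPR : ∀ {m j}, m ∈ s j → P m ⊆ ⋃ m ∈ s j, P m := subset_biUnion_of_mem
  refine ⟨fun j => ⋃ m ∈ s j, P m, fun j => .biUnion (hsfin j) fun m _ => hP m,
    fun i j hij => ?_, fun j => hPR (hks j), fun m => (hscov m).imp fun _ => hPR, ?_⟩
  · simp only [onFun, disjoint_iUnion₂_left, disjoint_iUnion₂_right]
    intro m hmj m' hm'i
    exact hPdis fun h => disjoint_left.1 (hsdis hij) hm'i (by rwa [h])
  · refine (iUnion_subset fun j => iUnion₂_subset fun m _ => subset_iUnion P m).antisymm ?_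
    exact iUnion_subset fun m => (hscov m).elim fun j hj =>
      (hPR hj).trans (subset_iUnion (fun j => ⋃ m ∈ s j, P m) j)

lemma computable_partition_dichotomy {P : ℕ → Set ℕ} (hP : ∀ m, ComputableSet (P m))
    (hPdis : Pairwise (Disjoint on P)) :
    (∃ R : ℕ → Set ℕ, (∀ j, ComputableSet (R j) ∧ (R j).Infinite) ∧
      Pairwise (Disjoint on R) ∧ (⋃ j, R j) = (⋃ m, P m) ∧ ∀ m, ∃ j, P m ⊆ R j) ∨
    ∃ K, ComputableSet K ∧ K ⊆ ⋃ m, P m ∧ ∀ m, SubsetStar (P m) K := by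
  by_cases hT : {m | (P m).Infinite}.Infinite
  · obtain ⟨R, hR, hRdis, hkR, hPR, hRU⟩ := exists_regroup hP hPdis (Nat.nth_strictMono hT)
    exact Or.inl ⟨R, fun j => ⟨hR j, (Nat.nth_mem_of_infinite hT j).mono (hkR j)⟩, hRdis, hRU,
      hPR⟩
  rw [not_infinite] at hT
  refine Or.inr ⟨⋃ m ∈ {m | (P m).Infinite}, P m, .biUnion hT fun m _ => hP m,
    iUnion₂_subset fun m _ => subset_iUnion P m, fun m => ?_⟩
  by_cases hm : (P m).Infinite
  · exact subsetStar_of_subset (subset_biUnion_of_mem hm)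
  · exact (not_infinite.1 hm).subset sdiff_subset

end Regrouping

section Type8

variable {A : Set ℕ}

lemma exists_computable_partition_generates {D R : ℕ → Set ℕ}
    (hR : ∀ j, ComputableSet (R j)) (hgen : Generates A (range D ∪ range R)) :
    ∃ P : ℕ → Set ℕ, (∀ m, ComputableSet (P m)) ∧ Pairwise (Disjoint on P) ∧
      (⋃ m, P m) = Aᶜ ∧
      Generates A (D '' {i | ¬ComputablySeparable (D i) A} ∪ range P) := by
  classical
  set N := {i | ¬ComputablySeparable (D i) A}
  have hC : ∀ i, ∃ C, ComputableSet C ∧ Disjoint C A ∧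
      (ComputablySeparable (D i) A → D i ⊆ C) :=
    fun i => if h : ComputablySeparable (D i) A then
      let ⟨C, hC, hDC, hCA⟩ := h; ⟨C, hC, hCA, fun _ => hDC⟩
    else ⟨∅, computableSet_empty, disjoint_bot_left, fun h' => absurd h' h⟩
  choose C hCc hCA hDC using hC
  -- the singletons `{m} \ A` make the pieces exhaust `Aᶜ`
  set Q : ℕ → Set ℕ := fun m => R m ∪ C m ∪ ({m} \ A)
  have hQ : ∀ m, ComputableSet (Q m) := fun m =>
    ((hR m).union (hCc m)).union (finite_singleton m).sdiff.computableSet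
  have hQA : ∀ m, Q m ⊆ Aᶜ := fun m => union_subset (union_subset
    (subset_compl_iff_disjoint_right.2 (hgen.disjoint (Or.inr ⟨m, rfl⟩)))
    (subset_compl_iff_disjoint_right.2 (hCA m))) fun _ hx => hx.2
  have hP : ∀ m, ComputableSet (disjointed Q m) := fun m => by
    rw [disjointed_apply, Finset.sup_set_eq_biUnion]
    exact (hQ m).diff (.biUnion (Finset.finite_toSet _) fun i _ => hQ i)
  have hQcov : ∀ m, AlmostCovered (D '' N ∪ range (disjointed Q)) (Q m) := fun m => by
    have hQP : Q m ⊆ ⋃ i ∈ Iic m, disjointed Q i := by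
      have := le_partialSups Q m
      rwa [← partialSups_disjointed, partialSups_eq_biSup] at this
    exact (AlmostCovered.biUnion (finite_Iic m) fun i _ =>
      .of_mem (Or.inr ⟨i, rfl⟩) subset_rfl).subset hQP
  refine ⟨disjointed Q, hP, disjoint_disjointed Q, ?_, hgen.of_almostCovered ?_ ?_ ?_ ?_⟩
  · rw [iUnion_disjointed]
    exact (iUnion_subset hQA).antisymm fun x hx => mem_iUnion.2 ⟨x, Or.inr ⟨rfl, hx⟩⟩
  · exact ((to_countable _).image D).union (countable_range _)
  · rintro _ (⟨i, -, rfl⟩ | ⟨m, rfl⟩)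
    exacts [hgen.ceSet (Or.inl ⟨i, rfl⟩), (hP m).ceSet]
  · rintro _ (⟨i, -, rfl⟩ | ⟨m, rfl⟩)
    exacts [hgen.disjoint (Or.inl ⟨i, rfl⟩),
      subset_compl_iff_disjoint_right.1 ((disjointed_subset Q m).trans (hQA m))]
  · rintro _ (⟨i, rfl⟩ | ⟨j, rfl⟩)
    · by_cases hi : ComputablySeparable (D i) A
      · exact (hQcov i).subset ((hDC i hi).trans (subset_union_right.trans subset_union_left))
      · exact .of_mem (Or.inl ⟨i, hi, rfl⟩) subset_rfl
    · exact (hQcov j).subset (subset_union_left.trans subset_union_left)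

lemma exists_lt_eight_hasGeneratorOfType {V : Set ℕ} {P : ℕ → Set ℕ}
    (hV : V = ∅ ∨ ¬ComputablySeparable V A) (hP : ∀ m, ComputableSet (P m))
    (hPdis : Pairwise (Disjoint on P)) (hgen : Generates A (insert V (range P))) :
    ∃ m < 8, HasGeneratorOfType A m := by
  have hVce := hgen.ceSet (mem_insert V _)
  have hVA := hgen.disjoint (mem_insert V _)
  have hUA : Disjoint (⋃ m, P m) A :=
    disjoint_iUnion_left.2 fun m => hgen.disjoint (mem_insert_of_mem V ⟨m, rfl⟩)
  rcases computable_partition_dichotomy hP hPdis with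
    ⟨R, hR, hRdis, hRU, hPR⟩ | ⟨K, hK, hKP, hPK⟩
  · have hRcov : ∀ j, AlmostCovered (insert V (range R)) (R j) :=
      fun j => .of_mem (mem_insert_of_mem V ⟨j, rfl⟩) subset_rfl
    have hgenR : Generates A (insert V (range R)) :=
      hgen.of_almostCovered ((countable_range R).insert V)
        (forall_mem_insert.2 ⟨hVce, forall_mem_range.2 fun j => (hR j).1.ceSet⟩)
        (forall_mem_insert.2 ⟨hVA, forall_mem_range.2 fun j =>
          hUA.mono_left (hRU ▸ subset_iUnion R j)⟩)
        (forall_mem_insert.2 ⟨.of_mem (mem_insert V _) subset_rfl, forall_mem_range.2 fun m =>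
          (hPR m).elim fun j hj => (hRcov j).subset hj⟩)
    rcases hV with rfl | hV
    · refine ⟨4, by norm_num, hasGeneratorOfType_four hR hRdis ?_⟩
      exact hgenR.of_almostCovered (countable_range R) (fun X hX => hgenR.ceSet (Or.inr hX))
        (fun X hX => hgenR.disjoint (Or.inr hX)) (forall_mem_insert.2 ⟨.of_finite finite_empty,
          forall_mem_range.2 fun j => .of_mem ⟨j, rfl⟩ subset_rfl⟩)
    · rcases hasGeneratorOfType_five_or_seven hV hR hRdis hgenR with h | h
      exacts [⟨5, by norm_num, h⟩, ⟨7, by norm_num, h⟩]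
  · have hgenK : Generates A {V ∪ K} :=
      hgen.of_almostCovered (countable_singleton _) (by rintro _ rfl; exact hVce.union hK.ceSet)
        (by rintro _ rfl; exact disjoint_union_left.2 ⟨hVA, hUA.mono_left hKP⟩)
        (forall_mem_insert.2 ⟨.of_mem rfl subset_union_left, forall_mem_range.2 fun m =>
          .of_subsetStar (hPK m) (.of_mem rfl subset_union_right)⟩)
    rcases hasGeneratorOfType_le_three hgenK with h | h | h
    exacts [⟨1, by norm_num, h⟩, ⟨2, by norm_num, h⟩, ⟨3, by norm_num, h⟩]

theorem infinite_setOf_not_computablySeparable (hlow : ∀ m < 8, ¬HasGeneratorOfType A m)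
    {D R : ℕ → Set ℕ} (hR : ∀ j, ComputableSet (R j))
    (hgen : Generates A (range D ∪ range R)) :
    {i | ¬ComputablySeparable (D i) A}.Infinite := by
  intro hN
  obtain ⟨P, hP, hPdis, -, hgenP⟩ := exists_computable_partition_generates hR hgen
  set N := {i | ¬ComputablySeparable (D i) A}
  set V := ⋃ i ∈ N, D i
  have hV : V = ∅ ∨ ¬ComputablySeparable V A := by
    rcases N.eq_empty_or_nonempty with hN0 | ⟨i, hi⟩
    · exact Or.inl (by simp [V, hN0])
    · exact Or.inr fun h => hi (h.mono (subset_biUnion_of_mem hi))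
  have hDce : ∀ i, CESet (D i) := fun i => hgen.ceSet (Or.inl ⟨i, rfl⟩)
  have hDA : ∀ i, Disjoint (D i) A := fun i => hgen.disjoint (Or.inl ⟨i, rfl⟩)
  have hgenV : Generates A (insert V (range P)) :=
    hgenP.of_almostCovered ((countable_range P).insert V)
      (forall_mem_insert.2 ⟨.biUnion hN fun i _ => hDce i,
        forall_mem_range.2 fun m => (hP m).ceSet⟩)
      (forall_mem_insert.2 ⟨disjoint_iUnion₂_left.2 fun i _ => hDA i,
        forall_mem_range.2 fun m => hgenP.disjoint (Or.inr ⟨m, rfl⟩)⟩)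
      (by
        rintro _ (⟨i, hi, rfl⟩ | ⟨m, rfl⟩)
        exacts [.of_mem (mem_insert V _) (subset_biUnion_of_mem hi),
          .of_mem (mem_insert_of_mem V ⟨m, rfl⟩) subset_rfl])
  obtain ⟨m, hm, h⟩ := exists_lt_eight_hasGeneratorOfType hV hP hPdis hgenV
  exact hlow m hm h

lemma exists_absorb_computable {X : Set ℕ} {D : ℕ → Set ℕ} (hD : ∀ n, CESet (D n))
    (hDsep : ∀ n, ¬ComputablySeparable (D n) A) (hDdis : Pairwise (Disjoint on D))
    (hDA : ∀ n, Disjoint (D n) A) (hX : ComputableSet X) (hXA : Disjoint X A) :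
    ∃ E : ℕ → Set ℕ, (∀ n, CESet (E n)) ∧ (∀ n, ¬ComputablySeparable (E n) A) ∧
      Pairwise (Disjoint on E) ∧ (∀ n, Disjoint (E n) A) ∧ (∀ n, D n ⊆ E n ∪ E 0) ∧
      X ⊆ E 0 := by
  have h0 : ∀ j ≠ 0, Disjoint (D 0 ∪ X) (D j \ X) := fun j hj =>
    disjoint_union_left.2 ⟨(hDdis hj.symm).mono_right sdiff_subset, disjoint_sdiff_right⟩
  refine ⟨fun n => if n = 0 then D 0 ∪ X else D n \ X, fun n => ?_, fun n => ?_,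
    fun i j hij => ?_, fun n => ?_, fun n => ?_, fun x hx => by simp [hx]⟩
  · dsimp only
    split_ifs
    exacts [(hD 0).union hX.ceSet, (hD n).diff hX]
  · dsimp only
    split_ifs
    exacts [fun h => hDsep 0 (h.mono subset_union_left), fun h => hDsep n (h.of_diff hX hXA)]
  · simp only [onFun]
    split_ifs with hi hj hj
    exacts [absurd (hi.trans hj.symm) hij, h0 j hj, (h0 i hi).symm,
      (hDdis hij).mono sdiff_subset sdiff_subset]
  · dsimp only
    split_ifs
    exacts [disjoint_union_left.2 ⟨hDA 0, hXA⟩, (hDA n).mono_left sdiff_subset]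
  · intro x hx
    by_cases hn : n = 0
    · subst hn; simp [hx]
    · by_cases hxX : x ∈ X <;> simp [hn, hx, hxX]

theorem infinite_setOf_infinite_diff_biUnion (h6 : ¬HasGeneratorOfType A 6) {D Q : ℕ → Set ℕ}
    (hDsep : ∀ n, ¬ComputablySeparable (D n) A) (hDdis : Pairwise (Disjoint on D))
    (hQ : ∀ k, ComputableSet (Q k)) (hgen : Generates A (range D ∪ range Q)) {F : Set ℕ}
    (hF : F.Finite) : {k | (Q k \ ⋃ n ∈ F, D n).Infinite}.Infinite := by
  intro hB
  set B := {k | (Q k \ ⋃ n ∈ F, D n).Infinite}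
  obtain ⟨E, hE, hEsep, hEdis, hEA, hDE, hXE⟩ := exists_absorb_computable
    (fun n => hgen.ceSet (Or.inl ⟨n, rfl⟩)) hDsep hDdis
    (fun n => hgen.disjoint (Or.inl ⟨n, rfl⟩)) (.biUnion hB fun k _ => hQ k)
    (disjoint_iUnion₂_left.2 fun k _ => hgen.disjoint (Or.inr ⟨k, rfl⟩))
  have hEcov : ∀ n, AlmostCovered (range E) (E n) := fun n => .of_mem ⟨n, rfl⟩ subset_rfl
  have hDcov : ∀ n, AlmostCovered (range E) (D n) :=
    fun n => ((hEcov n).union (hEcov 0)).subset (hDE n)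
  refine h6 (hasGeneratorOfType_six hEsep hEdis (hgen.of_almostCovered (countable_range E)
    (forall_mem_range.2 hE) (forall_mem_range.2 hEA) ?_))
  rintro _ (⟨n, rfl⟩ | ⟨k, rfl⟩)
  · exact hDcov n
  · by_cases hk : k ∈ B
    · exact (hEcov 0).subset ((subset_biUnion_of_mem hk).trans hXE)
    · exact .of_subsetStar (not_infinite.1 hk) (.biUnion hF fun n _ => hDcov n)

lemma type8Family_of_pairwise_disjoint {D R : ℕ → Set ℕ}
    (hD : ∀ i, CESet (D i) ∧ ¬ComputableSet (D i)) (hDdis : Pairwise (Disjoint on D))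
    (hR : ∀ j, ComputableSet (R j) ∧ (R j).Infinite) (hRdis : Pairwise (Disjoint on R)) :
    Type8Family D R :=
  ⟨injective_of_pairwise_disjoint hDdis fun i =>
      (infinite_of_not_computableSet (hD i).2).nonempty,
    injective_of_pairwise_disjoint hRdis fun j => (hR j).2.nonempty,
    fun i j h => (hD i).2 (h ▸ (hR j).1), hD, hDdis, hR, hRdis⟩

theorem exists_type8_refinement {D P : ℕ → Set ℕ}
    (hDsep : ∀ n, ¬ComputablySeparable (D n) A) (hDdis : Pairwise (Disjoint on D))
    (hP : ∀ m, ComputableSet (P m)) (hPdis : Pairwise (Disjoint on P))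
    (hPU : (⋃ m, P m) = Aᶜ) (hgen : Generates A (range D ∪ range P)) {k : ℕ → ℕ}
    (hk : StrictMono k) (hkD : ∀ j, (P (k j) \ ⋃ i ∈ Iic j, D i).Infinite) :
    ∃ D' R : ℕ → Set ℕ, Type8Family D' R ∧ Generates A (range D' ∪ range R) ∧
      (∀ j i, j < i → D' i ∩ R j = ∅) ∧ (∀ j, (R j \ ⋃ i ≤ j, D' i).Infinite) ∧
      (⋃ i, D' i) ⊆ (⋃ i, R i) ∧ (⋃ i, R i) = Aᶜ := by
  obtain ⟨R, hR, hRdis, hkR, hPR, hRU⟩ := exists_regroup hP hPdis hk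
  rw [hPU] at hRU
  have hRA : ∀ j, Disjoint (R j) A :=
    fun j => subset_compl_iff_disjoint_right.1 (hRU ▸ subset_iUnion R j)
  set D' := fun n => D n \ ⋃ j ∈ Iio n, R j
  have hC : ∀ n, ComputableSet (⋃ j ∈ Iio n, R j) :=
    fun n => .biUnion (finite_Iio n) fun j _ => hR j
  have hD'A : ∀ n, Disjoint (D' n) A :=
    fun n => (hgen.disjoint (Or.inl ⟨n, rfl⟩)).mono_left sdiff_subset
  have hD'nc : ∀ n, ¬ComputableSet (D' n) := fun n =>
    not_computableSet_of_not_computablySeparable (fun h => hDsep n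
      (h.of_diff (hC n) (disjoint_iUnion₂_left.2 fun j _ => hRA j))) (hD'A n)
  have hD'ce : ∀ n, CESet (D' n) := fun n => (hgen.ceSet (Or.inl ⟨n, rfl⟩)).diff (hC n)
  refine ⟨D', R, type8Family_of_pairwise_disjoint (fun n => ⟨hD'ce n, hD'nc n⟩)
    (fun i j hij => (hDdis hij).mono sdiff_subset sdiff_subset)
    (fun j => ⟨hR j, (hkD j).mono (sdiff_subset.trans (hkR j))⟩) hRdis,
    hgen.of_almostCovered ((countable_range D').union (countable_range R)) ?_ ?_ ?_,
    fun j i hji => ?_, fun j => ?_, ?_, hRU⟩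
  · rintro _ (⟨n, rfl⟩ | ⟨j, rfl⟩)
    exacts [hD'ce n, (hR j).ceSet]
  · rintro _ (⟨n, rfl⟩ | ⟨j, rfl⟩)
    exacts [hD'A n, hRA j]
  · rintro _ (⟨n, rfl⟩ | ⟨m, rfl⟩)
    · exact ((AlmostCovered.of_mem (Or.inl ⟨n, rfl⟩) subset_rfl).union
        (.biUnion (finite_Iio n) fun j _ => .of_mem (Or.inr ⟨j, rfl⟩) subset_rfl)).subset
        (subset_union_left.trans sdiff_union_self.superset)
    · obtain ⟨j, hj⟩ := hPR m
      exact .of_mem (Or.inr ⟨j, rfl⟩) hj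
  · exact disjoint_iff_inter_eq_empty.1
      (disjoint_sdiff_left.mono_right (subset_biUnion_of_mem (u := R) hji))
  · refine (hkD j).mono fun x hx => ⟨hkR j hx.1, fun hx' => hx.2 ?_⟩
    obtain ⟨i, hi, hxi⟩ := mem_iUnion₂.1 hx'
    exact mem_iUnion₂.2 ⟨i, hi, hxi.1⟩
  · rw [hRU]
    exact iUnion_subset fun n => subset_compl_iff_disjoint_right.2 (hD'A n)

end Type8

theorem stmt_14_general (A : Set ℕ) (h8 : SetOfType A 8) :
    ∃ D R : ℕ → Set ℕ, Type8Family D R ∧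
      Generates A (Set.range D ∪ Set.range R) ∧
      (∀ j i, j < i → D i ∩ R j = ∅) ∧
      (∀ j, (R j \ ⋃ i ≤ j, D i).Infinite) ∧
      (⋃ i, D i) ⊆ (⋃ i, R i) ∧ (⋃ i, R i) = Aᶜ := by
  obtain ⟨⟨_, hgen, D, R, rfl, -, -, -, -, hDdis, hR, -⟩, hlow⟩ := h8
  have hN := infinite_setOf_not_computablySeparable hlow (fun j => (hR j).1) hgen
  obtain ⟨P, hP, hPdis, hPU, hgenP⟩ :=
    exists_computable_partition_generates (fun j => (hR j).1) hgen
  set D' := D ∘ Nat.nth (· ∈ {i | ¬ComputablySeparable (D i) A})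
  rw [← Nat.range_nth_of_infinite hN, ← range_comp] at hgenP
  have hD'sep : ∀ n, ¬ComputablySeparable (D' n) A := Nat.nth_mem_of_infinite hN
  have hD'dis : Pairwise (Disjoint on D') := fun i j hij => hDdis ((Nat.nth_injective hN).ne hij)
  obtain ⟨k, hk, hkD⟩ := Filter.extraction_forall_of_frequently fun j =>
    Nat.frequently_atTop_iff_infinite.2 (infinite_setOf_infinite_diff_biUnion (hlow 6 (by norm_num))
      hD'sep hD'dis hP hgenP (finite_Iic j))
  exact exists_type8_refinement hD'sep hD'dis hP hPdis hPU hgenP hk hkD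

theorem stmt_14 (A : Set ℕ) (hA : CESet A) (h8 : SetOfType A 8) :
    ∃ D R : ℕ → Set ℕ, Type8Family D R ∧
      Generates A (Set.range D ∪ Set.range R) ∧
      (∀ j i, j < i → D i ∩ R j = ∅) ∧
      (∀ j, (R j \ ⋃ i ≤ j, D i).Infinite) ∧
      (⋃ i, D i) ⊆ (⋃ i, R i) ∧ (⋃ i, R i) = Aᶜ :=
  stmt_14_general A h8
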